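/- arXiv:0707.1387 — 3 statements merged into one kernel-verified Lean document; each statement's English description precedes it below -/
import Mathlib

section
/- The dual graph Γ_D of any Enriques diagram D is a tree (i.e., it is connected and contains no loops/cycles). -/
/-- An Enriques diagram: a finite rooted tree (partial order `le`, each non-root
vertex with immediate predecessor `pred`) with a proximity relation `prox`
satisfying the standard axioms. -/
structure EnriquesDiagram (V : Type) [Fintype V] [DecidableEq V] where
  le : V → V → Prop
  le_refl : ∀ a, le a a
  le_trans : ∀ a b c, le a b → le b c → le a c
  le_antisymm : ∀ a b, le a b → le b a → a = b
  root : V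
  root_le : ∀ v, le root v
  pred : V → V
  pred_le : ∀ v, v ≠ root → le (pred v) v
  pred_ne : ∀ v, v ≠ root → pred v ≠ v
  pred_max : ∀ v q, v ≠ root → le q v → q ≠ v → le q (pred v)
  prox : V → V → Prop
  prox_pred : ∀ v, v ≠ root → prox v (pred v)
  root_not_prox : ∀ q, ¬ prox root q
  prox_gt : ∀ p q, prox p q → le q p ∧ p ≠ q
  prox_at_most_two : ∀ p a b c, prox p a → prox p b → prox p c → a = b ∨ b = c ∨ a = c
  third_unique : ∀ p q a b, prox p q → prox a p → prox a q → prox b p → prox b q → a = b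
  prox_pred_prox : ∀ p q', p ≠ root → prox p q' → q' ≠ pred p → prox (pred p) q'

namespace EnriquesDiagram

variable {V : Type} [Fintype V] [DecidableEq V] (D : EnriquesDiagram V)

/-- Number of vertices of `D` proximate to `p`. -/
noncomputable def r (p : V) : ℕ := Set.ncard {q | D.prox q p}

/-- Weight of `p` in the dual graph: `r p + 1`. -/
noncomputable def omega (p : V) : ℕ := D.r p + 1

/-- `p` is extremal: it has no successor. -/
def Extremal (p : V) : Prop := ∀ q, D.le p q → q = p

/-- `p` is free: proximate to exactly one vertex. -/
def Free (p : V) : Prop := ∃! q, D.prox p q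

/-- `p` is satellite: proximate to two distinct vertices. -/
def Satellite (p : V) : Prop := ∃ q₁ q₂, q₁ ≠ q₂ ∧ D.prox p q₁ ∧ D.prox p q₂

/-- `p` is maximal among the vertices of `D` proximate to `q`. -/
def MaxProx (p q : V) : Prop := D.prox p q ∧ ∀ u, D.prox u q → D.le p u → u = p

/-- The dual graph `Γ_D`: `p` and `q` are adjacent iff one is maximal among the
vertices proximate to the other. -/
def dualGraph : SimpleGraph V where
  Adj p q := p ≠ q ∧ (D.MaxProx p q ∨ D.MaxProx q p)
  symm := by
    constructor
    intro p q h
    exact ⟨h.1.symm, h.2.symm⟩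
  loopless := by
    constructor
    intro p h
    exact h.1 rfl

end EnriquesDiagram

/-!
Orient every edge of `Γ_D` downwards, as `a – q` with `a` maximal among the vertices proximate
to `q`. Such an edge determines the child `w` of `q` on the chain from `q` to `a`. Conversely,
a non-root `w` is proximate to `pred w`. By `third_unique`, the vertices proximate to `pred w`
lying above `w` form a chain, so exactly one of them is maximal, and this gives back the edge.
Hence `Γ_D` has one edge per non-root vertex, i.e. `|V| - 1` edges, and a connected graph with
that many edges is a tree. For connectivity, `p` reaches `pred p` by climbing from `p` to
the last vertex proximate to `pred p`, which is adjacent to `pred p`. Every step of that climb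
joins a vertex above `p` to its predecessor, so induction from the top of the tree applies.
-/

namespace EnriquesDiagram

variable {V : Type} [Fintype V] [DecidableEq V] (D : EnriquesDiagram V)

def lt (x y : V) : Prop := D.le x y ∧ x ≠ y

instance : IsTrans V D.lt where
  trans a b c hab hbc :=
    ⟨D.le_trans a b c hab.1 hbc.1, by
      rintro rfl
      exact hab.2 (D.le_antisymm a b hab.1 hbc.1)⟩

instance : Std.Irrefl D.lt where
  irrefl _ h := h.2 rfl

lemma wellFounded_lt : WellFounded D.lt :=
  Finite.wellFounded_of_trans_of_irrefl D.lt

lemma wellFounded_gt : WellFounded (Function.swap D.lt) :=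
  Finite.wellFounded_of_trans_of_irrefl (Function.swap D.lt)

lemma pred_lt {v : V} (hv : v ≠ D.root) : D.lt (D.pred v) v :=
  ⟨D.pred_le v hv, D.pred_ne v hv⟩

lemma le_pred_of_lt {v q : V} (h : D.lt q v) : D.le q (D.pred v) :=
  D.pred_max v q (fun hv => h.2 (D.le_antisymm q v h.1 (hv ▸ D.root_le q))) h.1 h.2

lemma not_le_pred {v : V} (hv : v ≠ D.root) : ¬ D.le v (D.pred v) :=
  fun h => D.pred_ne v hv (D.le_antisymm _ _ (D.pred_le v hv) h)

lemma lt_of_prox {p q : V} (h : D.prox p q) : D.lt q p :=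
  ⟨(D.prox_gt p q h).1, (D.prox_gt p q h).2.symm⟩

lemma le_total_of_le {a x y : V} (hx : D.le x a) (hy : D.le y a) :
    D.le x y ∨ D.le y x := by
  induction a using D.wellFounded_lt.induction with
  | _ a ih =>
  by_cases hxa : x = a
  · exact Or.inr (hxa ▸ hy)
  by_cases hya : y = a
  · exact Or.inl (hya ▸ hx)
  have hpa : a ≠ D.root := fun h => hxa (D.le_antisymm x a hx (h ▸ D.root_le x))
  exact ih (D.pred a) (D.pred_lt hpa) (D.le_pred_of_lt ⟨hx, hxa⟩) (D.le_pred_of_lt ⟨hy, hya⟩)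

lemma exists_pred_eq_of_lt {a b : V} (h : D.lt b a) :
    ∃ w, w ≠ D.root ∧ D.pred w = b ∧ D.le w a := by
  induction a using D.wellFounded_lt.induction with
  | _ a ih =>
  have ha : a ≠ D.root := fun ha => h.2 (D.le_antisymm b a h.1 (ha ▸ D.root_le b))
  by_cases hpb : D.pred a = b
  · exact ⟨a, ha, hpb, D.le_refl a⟩
  obtain ⟨w, hw, hwb, hwa⟩ := ih (D.pred a) (D.pred_lt ha) ⟨D.le_pred_of_lt h, Ne.symm hpb⟩
  exact ⟨w, hw, hwb, D.le_trans w _ a hwa (D.pred_le a ha)⟩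

lemma eq_of_pred_eq {a w₁ w₂ : V} (h₁ : D.le w₁ a) (h₂ : D.le w₂ a)
    (hw₁ : w₁ ≠ D.root) (hw₂ : w₂ ≠ D.root) (hp : D.pred w₁ = D.pred w₂) : w₁ = w₂ := by
  by_contra hne
  rcases D.le_total_of_le h₁ h₂ with h | h
  · exact D.not_le_pred hw₁ (hp ▸ D.le_pred_of_lt ⟨h, hne⟩)
  · exact D.not_le_pred hw₂ (hp ▸ D.le_pred_of_lt ⟨h, Ne.symm hne⟩)

lemma prox_of_lt_of_le {a b y : V} (hab : D.prox a b) (hby : D.lt b y) (hya : D.le y a) :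
    D.prox y b := by
  induction a using D.wellFounded_lt.induction with
  | _ a ih =>
  by_cases hy : y = a
  · exact hy ▸ hab
  have ha : a ≠ D.root := fun ha => D.root_not_prox b (ha ▸ hab)
  have hya' : D.le y (D.pred a) := D.le_pred_of_lt ⟨hya, hy⟩
  have hpb : b ≠ D.pred a := fun h => hby.2 (D.le_antisymm b y hby.1 (h ▸ hya'))
  exact ih (D.pred a) (D.pred_lt ha) (D.prox_pred_prox a b ha hab hpb) hya'

lemma le_total_of_prox {b c a₁ a₂ : V} (hc : D.prox c b) (h₁ : D.prox a₁ b) (h₂ : D.prox a₂ b)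
    (hca₁ : D.le c a₁) (hca₂ : D.le c a₂) : D.le a₁ a₂ ∨ D.le a₂ a₁ := by
  induction c using D.wellFounded_gt.induction with
  | _ c ih =>
  by_cases hc₁ : c = a₁
  · exact Or.inl (hc₁ ▸ hca₂)
  by_cases hc₂ : c = a₂
  · exact Or.inr (hc₂ ▸ hca₁)
  have child : ∀ a, D.prox a b → D.lt c a →
      ∃ w, w ≠ D.root ∧ D.pred w = c ∧ D.le w a ∧ D.prox w b := by
    intro a hab hca
    obtain ⟨w, hw, hwc, hwa⟩ := D.exists_pred_eq_of_lt hca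
    have hcw : D.lt c w := hwc ▸ D.pred_lt hw
    exact ⟨w, hw, hwc, hwa,
      D.prox_of_lt_of_le hab (IsTrans.trans _ _ _ (D.lt_of_prox hc) hcw) hwa⟩
  obtain ⟨w, hw, hwc, hwa₁, hwb⟩ := child a₁ h₁ ⟨hca₁, hc₁⟩
  obtain ⟨w', hw', hw'c, hw'a₂, hw'b⟩ := child a₂ h₂ ⟨hca₂, hc₂⟩
  obtain rfl : w = w' := D.third_unique c b w w' hc (hwc ▸ D.prox_pred w hw) hwb
    (hw'c ▸ D.prox_pred w' hw') hw'b
  exact ih w (hwc ▸ D.pred_lt hw) hwb hwa₁ hw'a₂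

lemma MaxProx.eq {b w a₁ a₂ : V} (h₁ : D.MaxProx a₁ b) (h₂ : D.MaxProx a₂ b)
    (hw : D.prox w b) (hwa₁ : D.le w a₁) (hwa₂ : D.le w a₂) : a₁ = a₂ := by
  rcases D.le_total_of_prox hw h₁.1 h₂.1 hwa₁ hwa₂ with h | h
  · exact (h₁.2 a₂ h₂.1 h).symm
  · exact h₂.2 a₁ h₁.1 h

lemma exists_maxProx_of_prox {p q : V} (h : D.prox p q) : ∃ a, D.MaxProx a q ∧ D.le p a := by
  obtain ⟨a, ⟨haq, hpa⟩, hmax⟩ :=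
    D.wellFounded_gt.has_min {x | D.prox x q ∧ D.le p x} ⟨p, h, D.le_refl p⟩
  refine ⟨a, ⟨haq, fun u huq hau => ?_⟩, hpa⟩
  by_contra hne
  exact hmax u ⟨huq, D.le_trans p a u hpa hau⟩ ⟨hau, Ne.symm hne⟩

lemma maxProx_adj {a q : V} (h : D.MaxProx a q) : D.dualGraph.Adj a q :=
  ⟨(D.prox_gt a q h.1).2, Or.inl h⟩

lemma reachable_of_le {p u : V} (hpu : D.le p u)
    (h : ∀ x, D.lt p x → D.le x u → D.dualGraph.Reachable x (D.pred x)) :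
    D.dualGraph.Reachable p u := by
  induction u using D.wellFounded_lt.induction with
  | _ u ih =>
  by_cases hup : p = u
  · exact hup ▸ .rfl
  have hpu' : D.lt p u := ⟨hpu, hup⟩
  have hu : u ≠ D.root := fun hu => hup (D.le_antisymm p u hpu (hu ▸ D.root_le p))
  refine (ih (D.pred u) (D.pred_lt hu) (D.le_pred_of_lt hpu') fun x hpx hxu => ?_).trans
    (h u hpu' (D.le_refl u)).symm
  exact h x hpx (D.le_trans x _ u hxu (D.pred_le u hu))

lemma reachable_pred {p : V} (hp : p ≠ D.root) : D.dualGraph.Reachable p (D.pred p) := by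
  induction p using D.wellFounded_gt.induction with
  | _ p ih =>
  obtain ⟨a, ha, hpa⟩ := D.exists_maxProx_of_prox (D.prox_pred p hp)
  refine .trans ?_ (D.maxProx_adj ha).reachable
  refine D.reachable_of_le hpa fun x hpx _ => ih x hpx ?_
  rintro rfl
  exact hpx.2 (D.le_antisymm _ _ hpx.1 (D.root_le p))

lemma reachable_root (v : V) : D.dualGraph.Reachable v D.root := by
  induction v using D.wellFounded_lt.induction with
  | _ v ih =>
  by_cases hv : v = D.root
  · exact hv ▸ .rfl
  exact (D.reachable_pred hv).trans (ih _ (D.pred_lt hv))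

lemma dualGraph_connected : D.dualGraph.Connected :=
  have : Nonempty V := ⟨D.root⟩
  ⟨fun u v => (D.reachable_root u).trans (D.reachable_root v).symm⟩

/-- The last vertex proximate to `pred w` on the chain above `w`. -/
noncomputable def maxProxAbove (w : V) (hw : w ≠ D.root) : V :=
  (D.exists_maxProx_of_prox (D.prox_pred w hw)).choose

lemma maxProx_maxProxAbove (w : V) (hw : w ≠ D.root) :
    D.MaxProx (D.maxProxAbove w hw) (D.pred w) :=
  (D.exists_maxProx_of_prox (D.prox_pred w hw)).choose_spec.1

lemma le_maxProxAbove (w : V) (hw : w ≠ D.root) : D.le w (D.maxProxAbove w hw) :=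
  (D.exists_maxProx_of_prox (D.prox_pred w hw)).choose_spec.2

noncomputable def edgeOf (w : {w // w ≠ D.root}) : D.dualGraph.edgeSet :=
  ⟨s(D.maxProxAbove w w.2, D.pred w), D.maxProx_adj (D.maxProx_maxProxAbove w w.2)⟩

lemma edgeOf_injective : Function.Injective D.edgeOf := by
  rintro ⟨w₁, hw₁⟩ ⟨w₂, hw₂⟩ h
  have hle₁ := D.le_maxProxAbove w₁ hw₁
  have hle₂ := D.le_maxProxAbove w₂ hw₂
  rcases Sym2.eq_iff.1 (congrArg Subtype.val h) with ⟨hm, hp⟩ | ⟨hm₁, hm₂⟩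
  · exact Subtype.ext (D.eq_of_pred_eq hle₁ (hm ▸ hle₂) hw₁ hw₂ hp)
  · -- `w₁ ≤ pred w₂ < w₂ ≤ pred w₁` is impossible
    refine absurd ?_ (D.not_le_pred hw₁)
    refine D.le_trans _ _ _ hle₁ (D.le_trans _ _ _ ?_ (hm₂ ▸ hle₂))
    exact hm₁ ▸ D.pred_le w₂ hw₂

lemma exists_edgeOf_val_eq {a q : V} (h : D.MaxProx a q) : ∃ w, (D.edgeOf w).1 = s(a, q) := by
  obtain ⟨w, hw, rfl, hwa⟩ := D.exists_pred_eq_of_lt (D.lt_of_prox h.1)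
  exact ⟨⟨w, hw⟩, congrArg (s(·, D.pred w)) (MaxProx.eq D (D.maxProx_maxProxAbove w hw) h
    (D.prox_pred w hw) (D.le_maxProxAbove w hw) hwa)⟩

lemma edgeOf_surjective : Function.Surjective D.edgeOf := by
  rintro ⟨e, he⟩
  induction e using Sym2.ind with
  | _ x y =>
  rcases he.2 with h | h
  · obtain ⟨w, hw⟩ := D.exists_edgeOf_val_eq h
    exact ⟨w, Subtype.ext hw⟩
  · obtain ⟨w, hw⟩ := D.exists_edgeOf_val_eq h
    exact ⟨w, Subtype.ext (hw.trans Sym2.eq_swap)⟩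

lemma card_edgeSet_add_one : Nat.card D.dualGraph.edgeSet + 1 = Nat.card V := by
  rw [← Nat.card_eq_of_bijective _ ⟨D.edgeOf_injective, D.edgeOf_surjective⟩,
    ← Nat.card_congr (Equiv.optionSubtypeNe D.root)]
  simp only [Nat.card_eq_fintype_card, Fintype.card_option]

end EnriquesDiagram

/-- The dual graph of any Enriques diagram is a tree. -/
theorem stmt2 {V : Type} [Fintype V] [DecidableEq V] (D : EnriquesDiagram V) :
    D.dualGraph.IsTree :=
  SimpleGraph.isTree_iff_connected_and_card.2 ⟨D.dualGraph_connected, D.card_edgeSet_add_one⟩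
end

section
/- Let D be an Enriques diagram whose every extremal vertex is free (proximate to exactly one vertex). Let C be the set of non-extremal vertices of D, and suppose C is nonempty and the induced subgraph of Γ_D on C is connected. Then the contraction C is a subdiagram of D (i.e., the immediate predecessor in C of each non-root vertex of C coincides with its immediate predecessor in D), and D is recovered from C by attaching to each vertex p ∈ C exactly r_D(p) − r_C(p) free extremal successors. -/
/-! Since every vertex outside `C` is extremal, hence free, each such vertex `q` is proximate
only to its predecessor, so the vertices outside `C` attached to `p` are exactly the vertices
outside `C` proximate to `p`; there are `r_D(p) - r_C(p)` of them. The predecessor of a non-root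
vertex is never extremal, so it lies in `C`, and then it is also the predecessor in the
contraction, whose order is the restriction of the order of `D`. -/

namespace EnriquesDiagram

variable {V : Type} [Fintype V] [DecidableEq V] {D : EnriquesDiagram V}

theorem Free.ne_root {q : V} (h : D.Free q) : q ≠ D.root := by
  rintro rfl
  obtain ⟨u, hu, -⟩ := h
  exact D.root_not_prox u hu

theorem Free.pred_eq_of_prox {p q : V} (h : D.Free q)
    (hprox : D.prox q p) : D.pred q = p :=
  h.unique (D.prox_pred q h.ne_root) hprox

variable (D)

theorem not_extremal_pred {v : V} (hv : v ≠ D.root) : ¬ D.Extremal (D.pred v) :=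
  fun h => D.pred_ne v hv (h v (D.pred_le v hv)).symm

theorem ncard_not_mem_pred_eq (C : Finset V) (hfree : ∀ q, q ∉ C → D.Free q) (p : V) :
    ({q : V | q ∉ C ∧ q ≠ D.root ∧ D.pred q = p} : Set V).ncard
      = D.r p - ({q : V | q ∈ C ∧ D.prox q p} : Set V).ncard := by
  have hset : {q : V | q ∉ C ∧ q ≠ D.root ∧ D.pred q = p}
      = {q | D.prox q p} \ {q | q ∈ C ∧ D.prox q p} := by
    ext q
    constructor
    · rintro ⟨hqC, hqr, rfl⟩
      exact ⟨D.prox_pred q hqr, fun h => hqC h.1⟩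
    · rintro ⟨hqp, hnot⟩
      have hqC : q ∉ C := fun h => hnot ⟨h, hqp⟩
      exact ⟨hqC, (hfree q hqC).ne_root, (hfree q hqC).pred_eq_of_prox hqp⟩
  rw [hset, Set.ncard_sdiff fun q hq => hq.2]
  rfl

section Contraction

variable {D} {C : Finset V} {E : EnriquesDiagram {x : V // x ∈ C}}

theorem val_ne_root_of_ne_root (hle : ∀ a b, E.le a b ↔ D.le a.1 b.1)
    {p : {x : V // x ∈ C}} (hp : p ≠ E.root) : p.1 ≠ D.root := by
  intro h
  exact hp (E.le_antisymm _ _ ((hle _ _).2 (h ▸ D.root_le _)) (E.root_le p))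

theorem val_pred_of_pred_mem (hle : ∀ a b, E.le a b ↔ D.le a.1 b.1)
    {p : {x : V // x ∈ C}} (hp : p ≠ E.root) (hmem : D.pred p.1 ∈ C) :
    (E.pred p).1 = D.pred p.1 := by
  have hpD : p.1 ≠ D.root := val_ne_root_of_ne_root hle hp
  have hEpred_le : D.le (E.pred p).1 (D.pred p.1) :=
    D.pred_max _ _ hpD ((hle _ _).1 (E.pred_le p hp))
      fun h => E.pred_ne p hp (Subtype.ext h)
  have hDpred_le : D.le (D.pred p.1) (E.pred p).1 :=
    (hle ⟨_, hmem⟩ _).1 <| E.pred_max p _ hp ((hle _ _).2 (D.pred_le _ hpD))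
      fun h => D.pred_ne _ hpD (congrArg Subtype.val h)
  exact D.le_antisymm _ _ hEpred_le hDpred_le

theorem r_eq_ncard_mem_prox (hprox : ∀ a b, E.prox a b ↔ D.prox a.1 b.1) (p : V) (hp : p ∈ C) :
    E.r ⟨p, hp⟩ = ({q : V | q ∈ C ∧ D.prox q p} : Set V).ncard := by
  have himage : Subtype.val '' {q : {x : V // x ∈ C} | E.prox q ⟨p, hp⟩}
      = {q : V | q ∈ C ∧ D.prox q p} := by
    ext q
    constructor
    · rintro ⟨a, ha, rfl⟩
      exact ⟨a.2, (hprox a ⟨p, hp⟩).1 ha⟩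
    · rintro ⟨hq, hqp⟩
      exact ⟨⟨q, hq⟩, (hprox _ _).2 hqp, rfl⟩
  rw [EnriquesDiagram.r, ← himage, Set.ncard_image_of_injective _ Subtype.val_injective]

end Contraction

end EnriquesDiagram

theorem stmt9_general {V : Type} [Fintype V] [DecidableEq V] (D : EnriquesDiagram V)
    (hfree : ∀ p, D.Extremal p → D.Free p)
    (C : Finset V) (hC : ∀ v, v ∈ C ↔ ¬ D.Extremal v)
    (E : EnriquesDiagram {x : V // x ∈ C})
    (hle : ∀ a b, E.le a b ↔ D.le a.1 b.1)
    (hprox : ∀ a b, E.prox a b ↔ D.prox a.1 b.1) :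
    (∀ p : {x : V // x ∈ C}, p ≠ E.root → (E.pred p).1 = D.pred p.1) ∧
    (∀ p, ∀ hp : p ∈ C,
      ({q : V | q ∉ C ∧ q ≠ D.root ∧ D.pred q = p} : Set V).ncard
          = D.r p - E.r ⟨p, hp⟩ ∧
      ∀ q, q ∉ C → q ≠ D.root → D.pred q = p → D.Free q ∧ D.Extremal q) := by
  have hextremal : ∀ q, q ∉ C → D.Extremal q := fun q hq => not_not.1 (mt (hC q).2 hq)
  refine ⟨fun p hp => EnriquesDiagram.val_pred_of_pred_mem hle hp ?_, fun p hp => ⟨?_, ?_⟩⟩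
  · exact (hC _).2 (D.not_extremal_pred (EnriquesDiagram.val_ne_root_of_ne_root hle hp))
  · rw [EnriquesDiagram.r_eq_ncard_mem_prox hprox p hp]
    exact D.ncard_not_mem_pred_eq C (fun q hq => hfree q (hextremal q hq)) p
  · exact fun q hq _ _ => ⟨hfree q (hextremal q hq), hextremal q hq⟩

/-- If every extremal vertex of `D` is free and `C` is the (nonempty, connected)
set of non-extremal vertices of `D`, then the contraction on `C` is a subdiagram
of `D` (predecessors agree) and `D` is obtained from `C` by attaching to each
`p ∈ C` exactly `r_D(p) − r_C(p)` free extremal successors. -/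
theorem stmt9 {V : Type} [Fintype V] [DecidableEq V] (D : EnriquesDiagram V)
    (hfree : ∀ p, D.Extremal p → D.Free p)
    (C : Finset V) (hC : ∀ v, v ∈ C ↔ ¬ D.Extremal v) (hne : C.Nonempty)
    (hconn : (D.dualGraph.induce (↑C : Set V)).Connected)
    (E : EnriquesDiagram {x : V // x ∈ C})
    (hle : ∀ a b, E.le a b ↔ D.le a.1 b.1)
    (hprox : ∀ a b, E.prox a b ↔ D.prox a.1 b.1) :
    (∀ p : {x : V // x ∈ C}, p ≠ E.root → (E.pred p).1 = D.pred p.1) ∧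
    (∀ p, ∀ hp : p ∈ C,
      ({q : V | q ∉ C ∧ q ≠ D.root ∧ D.pred q = p} : Set V).ncard
          = D.r p - E.r ⟨p, hp⟩ ∧
      ∀ q, q ∉ C → q ≠ D.root → D.pred q = p → D.Free q ∧ D.Extremal q) :=
  stmt9_general D hfree C hC E hle hprox
end

section
/- Let D be an Enriques diagram and C a contraction of D. Suppose v ∈ C is such that v is maximal among the vertices of C proximate to some u ∈ C, and v corresponds to an end of Γ_C. Then v cannot be the root of C, v is free in C, and v is extremal in C. -/
/-!
The vertex `u` is a neighbour of `v` in `Γ_C`, so by the end hypothesis it is its only one.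
If `v` had a successor, some vertex would be maximal among those proximate to `v`, hence a
second neighbour of `v`, which would then have to be `u`; but `u` precedes `v`. So `v` is
extremal, and then `v` is maximal among the vertices proximate to any `q` it is proximate to:
every such `q` is a neighbour of `v`, so there is only one.
-/

namespace EnriquesDiagram

variable {V : Type} [Fintype V] [DecidableEq V] (D : EnriquesDiagram V)

/-- The tree order of `D` as a `PartialOrder` (not an instance: `V` may carry its own order). -/
abbrev toPartialOrder : PartialOrder V where
  le := D.le
  le_refl := D.le_refl
  le_trans := D.le_trans
  le_antisymm := D.le_antisymm

lemma exists_maximal {S : Set V} (hS : S.Nonempty) :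
    ∃ w ∈ S, ∀ x ∈ S, D.le w x → x = w := by
  let := D.toPartialOrder
  obtain ⟨w, hwS, hw⟩ := S.toFinite.exists_maximal hS
  exact ⟨w, hwS, fun x hx hwx => D.le_antisymm _ _ (hw hx hwx) hwx⟩

lemma exists_minimal {S : Set V} (hS : S.Nonempty) :
    ∃ w ∈ S, ∀ x ∈ S, D.le x w → x = w := by
  let := D.toPartialOrder
  obtain ⟨w, hwS, hw⟩ := S.toFinite.exists_minimal hS
  exact ⟨w, hwS, fun x hx hxw => D.le_antisymm _ _ hxw (hw hx hxw)⟩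

variable {D}

lemma ne_root_of_prox {p q : V} (h : D.prox p q) : p ≠ D.root :=
  fun hp => D.root_not_prox q (hp ▸ h)

lemma dualGraph_adj_of_maxProx {p q : V} (h : D.MaxProx p q) : D.dualGraph.Adj p q :=
  ⟨(D.prox_gt p q h.1).2, Or.inl h⟩

lemma maxProx_of_extremal {p q : V} (hp : D.Extremal p) (hpq : D.prox p q) : D.MaxProx p q :=
  ⟨hpq, fun w _ hpw => hp w hpw⟩

/-- A minimal strict successor of `v` has `v` as its immediate predecessor. -/
lemma exists_pred_eq_of_not_extremal {v : V} (hv : ¬ D.Extremal v) :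
    ∃ m, m ≠ D.root ∧ D.pred m = v := by
  obtain ⟨q, hvq, hqv⟩ : ∃ q, D.le v q ∧ q ≠ v := by
    simpa only [Extremal, not_forall, exists_prop] using hv
  obtain ⟨m, ⟨hvm, hmv⟩, hmin⟩ :=
    D.exists_minimal (S := {q | D.le v q ∧ q ≠ v}) ⟨q, hvq, hqv⟩
  have hm : m ≠ D.root := fun h => hmv (D.le_antisymm _ _ (h ▸ D.root_le v) hvm)
  refine ⟨m, hm, by_contra fun hne => D.pred_ne m hm ?_⟩
  exact hmin _ ⟨D.pred_max m v hm hvm (Ne.symm hmv), hne⟩ (D.pred_le m hm)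

lemma exists_maxProx_of_not_extremal {v : V} (hv : ¬ D.Extremal v) : ∃ w, D.MaxProx w v := by
  obtain ⟨m, hm, rfl⟩ := exists_pred_eq_of_not_extremal hv
  exact D.exists_maximal ⟨m, D.prox_pred m hm⟩

lemma extremal_of_maxProx_of_existsUnique_adj {v u : V} (hvu : D.MaxProx v u)
    (hend : ∃! w, D.dualGraph.Adj v w) : D.Extremal v := by
  by_contra hv
  obtain ⟨w, hwv⟩ := exists_maxProx_of_not_extremal hv
  have hwu : w = u :=
    hend.unique (dualGraph_adj_of_maxProx hwv).symm (dualGraph_adj_of_maxProx hvu)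
  have hvw : D.le v w := (D.prox_gt w v hwv.1).1
  obtain ⟨huv, hne⟩ := D.prox_gt v u hvu.1
  exact hne (D.le_antisymm _ _ (hwu ▸ hvw) huv)

lemma free_of_extremal_of_existsUnique_adj {v : V} (hroot : v ≠ D.root) (hv : D.Extremal v)
    (hend : ∃! w, D.dualGraph.Adj v w) : D.Free v := by
  refine ⟨D.pred v, D.prox_pred v hroot, fun q hq => hend.unique ?_ ?_⟩
  · exact dualGraph_adj_of_maxProx (maxProx_of_extremal hv hq)
  · exact dualGraph_adj_of_maxProx (maxProx_of_extremal hv (D.prox_pred v hroot))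

end EnriquesDiagram

open EnriquesDiagram in
theorem stmt15_general {V : Type} [Fintype V] [DecidableEq V]
    (C : Finset V)
    (E : EnriquesDiagram {x : V // x ∈ C})
    (v u : {x : V // x ∈ C})
    (hmaxprox : E.MaxProx v u)
    (hend : ∃! w, E.dualGraph.Adj v w) :
    v ≠ E.root ∧ E.Free v ∧ E.Extremal v := by
  have hroot : v ≠ E.root := ne_root_of_prox hmaxprox.1
  have hext : E.Extremal v := extremal_of_maxProx_of_existsUnique_adj hmaxprox hend
  exact ⟨hroot, free_of_extremal_of_existsUnique_adj hroot hext hend, hext⟩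

/-- If `v` is maximal among the vertices of a contraction `C` proximate to some
`u ∈ C` and `v` is an end of the dual graph `Γ_C`, then `v` is not the root of
`C`, `v` is free in `C`, and `v` is extremal in `C`. -/
theorem stmt15 {V : Type} [Fintype V] [DecidableEq V] (D : EnriquesDiagram V)
    (C : Finset V) (hconn : (D.dualGraph.induce (↑C : Set V)).Connected)
    (E : EnriquesDiagram {x : V // x ∈ C})
    (hle : ∀ a b, E.le a b ↔ D.le a.1 b.1)
    (hprox : ∀ a b, E.prox a b ↔ D.prox a.1 b.1)
    (v u : {x : V // x ∈ C})
    (hmaxprox : E.MaxProx v u)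
    (hend : ∃! w, E.dualGraph.Adj v w) :
    v ≠ E.root ∧ E.Free v ∧ E.Extremal v :=
  stmt15_general C E v u hmaxprox hend
end
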